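/- In the component model of N=2 superspace, let B and B̄ be odd elements of A satisfying the chirality conditions (DB) = 0 and (D̄B̄) = 0, and let R := (DB̄) − (D̄B) − B·B̄ be the superprojective connection given by the super Miura transformation. Then the antichiral Bol operator of order 3, given by the supercovariant derivative chain starting at weight (−3,0), depends on B, B̄ only through R: D̄∘[(D − 2M_B)∘(D̄ + M_{B̄}) + D̄∘(D − M_B)]∘[(D − M_B)∘(D̄ + 2M_{B̄}) + (D̄ + M_{B̄})∘D]∘D = D̄∘[∂² + 3·M_R∘∂ + M_{(D̄DR)} + 2·M_{(DD̄R)} + 2·M_{R·R}]∘D (equality of ℝ-linear operators on A). This is the identity D̄K₂D with K₂ = ∂² + 3𝓡∂ + (D̄D𝓡) + 2(DD̄𝓡) + 2𝓡². -/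
import Mathlib


open scoped ContDiff

/-- A superfield of `N=2` superspace in components:
`f = a + θ·α + θ̄·β + θθ̄·b` with `a, α, β, b` smooth functions of `z`. -/
structure SF : Type where
  a : ℝ → ℝ
  al : ℝ → ℝ
  be : ℝ → ℝ
  b : ℝ → ℝ
  ha : ContDiff ℝ ∞ a
  hal : ContDiff ℝ ∞ al
  hbe : ContDiff ℝ ∞ be
  hb : ContDiff ℝ ∞ b

namespace SF

lemma derivSmooth {f : ℝ → ℝ} (hf : ContDiff ℝ ∞ f) : ContDiff ℝ ∞ (deriv f) :=
  (contDiff_infty_iff_deriv.mp hf).2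

noncomputable instance : Zero SF :=
  ⟨⟨fun _ => 0, fun _ => 0, fun _ => 0, fun _ => 0,
    contDiff_const, contDiff_const, contDiff_const, contDiff_const⟩⟩

noncomputable instance : Add SF :=
  ⟨fun f g =>
    ⟨fun z => f.a z + g.a z, fun z => f.al z + g.al z,
     fun z => f.be z + g.be z, fun z => f.b z + g.b z,
     f.ha.add g.ha, f.hal.add g.hal, f.hbe.add g.hbe, f.hb.add g.hb⟩⟩

noncomputable instance : Sub SF :=
  ⟨fun f g =>
    ⟨fun z => f.a z - g.a z, fun z => f.al z - g.al z,
     fun z => f.be z - g.be z, fun z => f.b z - g.b z,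
     f.ha.sub g.ha, f.hal.sub g.hal, f.hbe.sub g.hbe, f.hb.sub g.hb⟩⟩

noncomputable instance : SMul ℝ SF :=
  ⟨fun c f =>
    ⟨fun z => c * f.a z, fun z => c * f.al z, fun z => c * f.be z, fun z => c * f.b z,
     contDiff_const.mul f.ha, contDiff_const.mul f.hal,
     contDiff_const.mul f.hbe, contDiff_const.mul f.hb⟩⟩

/-- Grassmann multiplication on `A = C^∞(ℝ) ⊗ Λ[θ,θ̄]`. -/
noncomputable instance : Mul SF :=
  ⟨fun f g =>
    ⟨fun z => f.a z * g.a z,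
     fun z => f.al z * g.a z + f.a z * g.al z,
     fun z => f.be z * g.a z + f.a z * g.be z,
     fun z => f.b z * g.a z + f.a z * g.b z + f.al z * g.be z - f.be z * g.al z,
     f.ha.mul g.ha,
     (f.hal.mul g.ha).add (f.ha.mul g.hal),
     (f.hbe.mul g.ha).add (f.ha.mul g.hbe),
     (((f.hb.mul g.ha).add (f.ha.mul g.hb)).add (f.hal.mul g.hbe)).sub
       (f.hbe.mul g.hal)⟩⟩

/-- The even derivative `∂ = ∂/∂z`. -/
noncomputable def pa (f : SF) : SF :=
  ⟨deriv f.a, deriv f.al, deriv f.be, deriv f.b,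
   derivSmooth f.ha, derivSmooth f.hal, derivSmooth f.hbe, derivSmooth f.hb⟩

/-- The supersymmetry derivative `D = ∂/∂θ + (1/2)θ̄∂` in components. -/
noncomputable def Dop (f : SF) : SF :=
  ⟨f.al, fun _ => 0, fun z => f.b z + deriv f.a z / 2, fun z => -(deriv f.al z / 2),
   f.hal, contDiff_const,
   f.hb.add ((derivSmooth f.ha).div_const 2),
   ((derivSmooth f.hal).div_const 2).neg⟩

/-- The supersymmetry derivative `D̄ = ∂/∂θ̄ + (1/2)θ∂` in components. -/
noncomputable def Dbop (f : SF) : SF :=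
  ⟨f.be, fun z => deriv f.a z / 2 - f.b z, fun _ => 0, fun z => deriv f.be z / 2,
   f.hbe, ((derivSmooth f.ha).div_const 2).sub f.hb, contDiff_const,
   (derivSmooth f.hbe).div_const 2⟩

/-- `f` is odd iff `f = θ·b₁ + θ̄·b₂`, i.e. its even components vanish. -/
def IsOdd (f : SF) : Prop := (∀ z, f.a z = 0) ∧ (∀ z, f.b z = 0)

end SF


namespace SF

lemma ext4 {f g : SF} (h1 : f.a = g.a) (h2 : f.al = g.al) (h3 : f.be = g.be)
    (h4 : f.b = g.b) : f = g := by
  cases f; cases g; simp only at h1 h2 h3 h4; subst h1 h2 h3 h4; rfl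

lemma diffOf {u : ℝ → ℝ} (h : ContDiff ℝ ∞ u) : Differentiable ℝ u :=
  (contDiff_infty_iff_deriv.mp h).1

@[simp] lemma add_a (f g : SF) : (f + g).a = fun z => f.a z + g.a z := rfl
@[simp] lemma add_al (f g : SF) : (f + g).al = fun z => f.al z + g.al z := rfl
@[simp] lemma add_be (f g : SF) : (f + g).be = fun z => f.be z + g.be z := rfl
@[simp] lemma add_b (f g : SF) : (f + g).b = fun z => f.b z + g.b z := rfl
@[simp] lemma sub_a (f g : SF) : (f - g).a = fun z => f.a z - g.a z := rfl
@[simp] lemma sub_al (f g : SF) : (f - g).al = fun z => f.al z - g.al z := rfl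
@[simp] lemma sub_be (f g : SF) : (f - g).be = fun z => f.be z - g.be z := rfl
@[simp] lemma sub_b (f g : SF) : (f - g).b = fun z => f.b z - g.b z := rfl
@[simp] lemma smul_a (c : ℝ) (f : SF) : (c • f).a = fun z => c * f.a z := rfl
@[simp] lemma smul_al (c : ℝ) (f : SF) : (c • f).al = fun z => c * f.al z := rfl
@[simp] lemma smul_be (c : ℝ) (f : SF) : (c • f).be = fun z => c * f.be z := rfl
@[simp] lemma smul_b (c : ℝ) (f : SF) : (c • f).b = fun z => c * f.b z := rfl
@[simp] lemma mul_a (f g : SF) : (f * g).a = fun z => f.a z * g.a z := rfl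
@[simp] lemma mul_al (f g : SF) : (f * g).al = fun z => f.al z * g.a z + f.a z * g.al z := rfl
@[simp] lemma mul_be (f g : SF) : (f * g).be = fun z => f.be z * g.a z + f.a z * g.be z := rfl
@[simp] lemma mul_b (f g : SF) :
    (f * g).b = fun z => f.b z * g.a z + f.a z * g.b z + f.al z * g.be z - f.be z * g.al z := rfl
@[simp] lemma pa_a (f : SF) : (pa f).a = deriv f.a := rfl
@[simp] lemma pa_al (f : SF) : (pa f).al = deriv f.al := rfl
@[simp] lemma pa_be (f : SF) : (pa f).be = deriv f.be := rfl
@[simp] lemma pa_b (f : SF) : (pa f).b = deriv f.b := rfl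
@[simp] lemma D_a (f : SF) : (Dop f).a = f.al := rfl
@[simp] lemma D_al (f : SF) : (Dop f).al = fun _ => (0 : ℝ) := rfl
@[simp] lemma D_be (f : SF) : (Dop f).be = fun z => f.b z + deriv f.a z / 2 := rfl
@[simp] lemma D_b (f : SF) : (Dop f).b = fun z => -(deriv f.al z / 2) := rfl
@[simp] lemma Db_a (f : SF) : (Dbop f).a = f.be := rfl
@[simp] lemma Db_al (f : SF) : (Dbop f).al = fun z => deriv f.a z / 2 - f.b z := rfl
@[simp] lemma Db_be (f : SF) : (Dbop f).be = fun _ => (0 : ℝ) := rfl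
@[simp] lemma Db_b (f : SF) : (Dbop f).b = fun z => deriv f.be z / 2 := rfl
@[simp] lemma zero_a : (0 : SF).a = fun _ => (0 : ℝ) := rfl
@[simp] lemma zero_al : (0 : SF).al = fun _ => (0 : ℝ) := rfl
@[simp] lemma zero_be : (0 : SF).be = fun _ => (0 : ℝ) := rfl
@[simp] lemma zero_b : (0 : SF).b = fun _ => (0 : ℝ) := rfl

end SF

section derivFun
variable {u v : ℝ → ℝ} {c : ℝ}

lemma derivFun_add (hu : Differentiable ℝ u) (hv : Differentiable ℝ v) :
    (deriv fun z => u z + v z) = fun z => deriv u z + deriv v z :=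
  funext fun x => deriv_add (hu x) (hv x)

lemma derivFun_sub (hu : Differentiable ℝ u) (hv : Differentiable ℝ v) :
    (deriv fun z => u z - v z) = fun z => deriv u z - deriv v z :=
  funext fun x => deriv_sub (hu x) (hv x)

lemma derivFun_mul (hu : Differentiable ℝ u) (hv : Differentiable ℝ v) :
    (deriv fun z => u z * v z) = fun z => deriv u z * v z + u z * deriv v z :=
  funext fun x => deriv_mul (hu x) (hv x)

lemma derivFun_cmul (c : ℝ) : (deriv fun z => c * u z) = fun z => c * deriv u z :=
  funext fun _ => deriv_const_mul_field c

lemma derivFun_div (c : ℝ) : (deriv fun z => u z / c) = fun z => deriv u z / c :=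
  funext fun _ => deriv_div_const c

lemma derivFun_neg : (deriv fun z => -(u z)) = fun z => -(deriv u z) :=
  funext fun _ => deriv.neg

end derivFun

set_option maxHeartbeats 4000000 in
/-- In the component model of `N=2` superspace, for odd `B, B̄ ∈ A`
satisfying the chirality conditions `(DB) = 0`, `(D̄B̄) = 0`, and with
`R := (DB̄) − (D̄B) − B·B̄` the superprojective connection given by the super Miura
transformation, the antichiral Bol operator of order 3 (the supercovariant
derivative chain starting at weight `(−3,0)`) depends on `B, B̄` only through `R`:
`D̄∘[(D − 2M_B)∘(D̄ + M_{B̄}) + D̄∘(D − M_B)]∘[(D − M_B)∘(D̄ + 2M_{B̄}) + (D̄ + M_{B̄})∘D]∘D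
  = D̄∘[∂² + 3·M_R∘∂ + M_{(D̄DR)} + 2·M_{(DD̄R)} + 2·M_{R·R}]∘D`
(equality of `ℝ`-linear operators on `A`).  This is `D̄K₂D` with
`K₂ = ∂² + 3𝓡∂ + (D̄D𝓡) + 2(DD̄𝓡) + 2𝓡²`. -/
theorem antichiral_bol_operator_order_three (B Bb : SF) (hB : B.IsOdd) (hBb : Bb.IsOdd)
    (hchirB : SF.Dop B = 0) (hchirBb : SF.Dbop Bb = 0)
    (R : SF) (hR : R = SF.Dop Bb - SF.Dbop B - B * Bb) :
    ∀ f : SF,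
      (let g := SF.Dop f
       let h := (SF.Dop (SF.Dbop g + (2 : ℝ) • (Bb * g))
                  - B * (SF.Dbop g + (2 : ℝ) • (Bb * g)))
                + (SF.Dbop (SF.Dop g) + Bb * SF.Dop g)
       SF.Dbop ((SF.Dop (SF.Dbop h + Bb * h) - (2 : ℝ) • (B * (SF.Dbop h + Bb * h)))
                + SF.Dbop (SF.Dop h - B * h))) =
      SF.Dbop (SF.pa (SF.pa (SF.Dop f)) + (3 : ℝ) • (R * SF.pa (SF.Dop f))
        + SF.Dbop (SF.Dop R) * SF.Dop f + (2 : ℝ) • (SF.Dop (SF.Dbop R) * SF.Dop f)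
        + (2 : ℝ) • ((R * R) * SF.Dop f)) := by
  intro f
  have hBa : B.a = fun _ => 0 := funext hB.1
  have hBb' : B.b = fun _ => 0 := funext hB.2
  have hBba : Bb.a = fun _ => 0 := funext hBb.1
  have hBbb : Bb.b = fun _ => 0 := funext hBb.2
  have hBal : B.al = fun _ => 0 := congrArg SF.a hchirB
  have hBbbe : Bb.be = fun _ => 0 := congrArg SF.a hchirBb
  subst hR
  have d1 : Differentiable ℝ f.a := SF.diffOf f.ha
  have d2 : Differentiable ℝ (deriv f.a) := SF.diffOf (SF.derivSmooth f.ha)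
  have d3 : Differentiable ℝ (deriv (deriv f.a)) :=
    SF.diffOf (SF.derivSmooth (SF.derivSmooth f.ha))
  have d4 : Differentiable ℝ (deriv (deriv (deriv f.a))) :=
    SF.diffOf (SF.derivSmooth (SF.derivSmooth (SF.derivSmooth f.ha)))
  have e1 : Differentiable ℝ f.al := SF.diffOf f.hal
  have e2 : Differentiable ℝ (deriv f.al) := SF.diffOf (SF.derivSmooth f.hal)
  have e3 : Differentiable ℝ (deriv (deriv f.al)) :=
    SF.diffOf (SF.derivSmooth (SF.derivSmooth f.hal))
  have e4 : Differentiable ℝ (deriv (deriv (deriv f.al))) :=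
    SF.diffOf (SF.derivSmooth (SF.derivSmooth (SF.derivSmooth f.hal)))
  have g1 : Differentiable ℝ f.be := SF.diffOf f.hbe
  have g2 : Differentiable ℝ (deriv f.be) := SF.diffOf (SF.derivSmooth f.hbe)
  have g3 : Differentiable ℝ (deriv (deriv f.be)) :=
    SF.diffOf (SF.derivSmooth (SF.derivSmooth f.hbe))
  have g4 : Differentiable ℝ (deriv (deriv (deriv f.be))) :=
    SF.diffOf (SF.derivSmooth (SF.derivSmooth (SF.derivSmooth f.hbe)))
  have k1 : Differentiable ℝ f.b := SF.diffOf f.hb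
  have k2 : Differentiable ℝ (deriv f.b) := SF.diffOf (SF.derivSmooth f.hb)
  have k3 : Differentiable ℝ (deriv (deriv f.b)) :=
    SF.diffOf (SF.derivSmooth (SF.derivSmooth f.hb))
  have k4 : Differentiable ℝ (deriv (deriv (deriv f.b))) :=
    SF.diffOf (SF.derivSmooth (SF.derivSmooth (SF.derivSmooth f.hb)))
  have p1 : Differentiable ℝ B.be := SF.diffOf B.hbe
  have p2 : Differentiable ℝ (deriv B.be) := SF.diffOf (SF.derivSmooth B.hbe)
  have p3 : Differentiable ℝ (deriv (deriv B.be)) :=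
    SF.diffOf (SF.derivSmooth (SF.derivSmooth B.hbe))
  have q1 : Differentiable ℝ Bb.al := SF.diffOf Bb.hal
  have q2 : Differentiable ℝ (deriv Bb.al) := SF.diffOf (SF.derivSmooth Bb.hal)
  have q3 : Differentiable ℝ (deriv (deriv Bb.al)) :=
    SF.diffOf (SF.derivSmooth (SF.derivSmooth Bb.hal))
  apply SF.ext4 <;> funext z <;>
    simp (disch := fun_prop) only [SF.add_a, SF.add_al, SF.add_be, SF.add_b, SF.sub_a,
      SF.sub_al, SF.sub_be, SF.sub_b, SF.smul_a, SF.smul_al, SF.smul_be, SF.smul_b,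
      SF.mul_a, SF.mul_al, SF.mul_be, SF.mul_b, SF.pa_a, SF.pa_al, SF.pa_be, SF.pa_b,
      SF.D_a, SF.D_al, SF.D_be, SF.D_b, SF.Db_a, SF.Db_al, SF.Db_be, SF.Db_b,
      hBa, hBb', hBba, hBbb, hBal, hBbbe,
      derivFun_add, derivFun_sub, derivFun_mul, derivFun_cmul, derivFun_div,
      derivFun_neg, deriv_const', mul_zero, zero_mul, add_zero, zero_add, sub_zero,
      zero_sub, neg_zero, zero_div, mul_one, one_mul, neg_neg] <;>
    ring
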